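/- For every T ∈ (0,∞) and every y_T ∈ R_T: ‖y_T‖_{R_T} = sup{ ⟨y_T, z⟩ / ∫₀^T ‖B^⊤·exp((T−t)·A^⊤)·z‖ dt : z ∈ ℝⁿ such that the function t ↦ B^⊤·exp((T−t)·A^⊤)·z is not identically zero on (0,T) }. -/

import Mathlib

/-!
Setting: fix `n, m ≥ 1`, a matrix `A ∈ ℝ^{n×n}` and a nonzero matrix `B ∈ ℝ^{n×m}`.
States live in `EuclideanSpace ℝ (Fin n)` and control values in `EuclideanSpace ℝ (Fin m)`
(so that all norms are the Euclidean ones).  For `y₀ ∈ ℝⁿ`, `t ≥ 0` and a control `u`,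
the state is `y(t;y₀,u) = e^{tA} y₀ + ∫₀ᵗ e^{(t-s)A} B u(s) ds`.
-/

open MeasureTheory Set Matrix
open scoped ENNReal RealInnerProductSpace

noncomputable section

namespace ControlBBP

/-- Matrix–vector multiplication, regarded as a map between Euclidean spaces. -/
def mulVecE {a b : ℕ} (M : Matrix (Fin a) (Fin b) ℝ)
    (x : EuclideanSpace ℝ (Fin b)) : EuclideanSpace ℝ (Fin a) :=
  (EuclideanSpace.equiv (Fin a) ℝ).symm (M.mulVec (EuclideanSpace.equiv (Fin b) ℝ x))

variable {n m : ℕ}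

/-- `∫₀ᵀ e^{(T-s)A} B v(s) ds`, the state at time `T` starting from `0` with control `v`. -/
def reachOutput (A : Matrix (Fin n) (Fin n) ℝ) (B : Matrix (Fin n) (Fin m) ℝ)
    (T : ℝ) (v : ℝ → EuclideanSpace ℝ (Fin m)) : EuclideanSpace ℝ (Fin n) :=
  ∫ s in Ioc (0 : ℝ) T, mulVecE (NormedSpace.exp ((T - s) • A)) (mulVecE B (v s))

/-- The state `y(t; y₀, u) = e^{tA} y₀ + ∫₀ᵗ e^{(t-s)A} B u(s) ds`. -/
def state (A : Matrix (Fin n) (Fin n) ℝ) (B : Matrix (Fin n) (Fin m) ℝ)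
    (y0 : EuclideanSpace ℝ (Fin n)) (t : ℝ) (u : ℝ → EuclideanSpace ℝ (Fin m)) :
    EuclideanSpace ℝ (Fin n) :=
  mulVecE (NormedSpace.exp (t • A)) y0 + reachOutput A B t u

/-- The `L^∞(0,T;ℝ^m)`-norm of a control, valued in `[0,∞]`. -/
def supNorm (T : ℝ) (v : ℝ → EuclideanSpace ℝ (Fin m)) : ℝ≥0∞ :=
  eLpNorm v ⊤ (volume.restrict (Ioo (0 : ℝ) T))

/-- `v` is an admissible control for the minimal norm problem `(NP)^{T,y₀}`:
it is measurable, essentially bounded on `(0,T)`, and steers `y₀` to `0` at time `T`. -/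
def NPAdmissible (A : Matrix (Fin n) (Fin n) ℝ) (B : Matrix (Fin n) (Fin m) ℝ)
    (T : ℝ) (y0 : EuclideanSpace ℝ (Fin n)) (v : ℝ → EuclideanSpace ℝ (Fin m)) : Prop :=
  Measurable v ∧ supNorm T v < ⊤ ∧ state A B y0 T v = 0

/-- The minimal norm `N(T,y₀) ∈ [0,∞]` (with `inf ∅ = ∞`). -/
def Nmin (A : Matrix (Fin n) (Fin n) ℝ) (B : Matrix (Fin n) (Fin m) ℝ)
    (T : ℝ) (y0 : EuclideanSpace ℝ (Fin n)) : ℝ≥0∞ :=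
  ⨅ (v : ℝ → EuclideanSpace ℝ (Fin m)) (_ : NPAdmissible A B T y0 v), supNorm T v

/-- `v` is a minimal norm control for `(NP)^{T,y₀}`. -/
def IsMinNormControl (A : Matrix (Fin n) (Fin n) ℝ) (B : Matrix (Fin n) (Fin m) ℝ)
    (T : ℝ) (y0 : EuclideanSpace ℝ (Fin n)) (v : ℝ → EuclideanSpace ℝ (Fin m)) : Prop :=
  NPAdmissible A B T y0 v ∧ supNorm T v = Nmin A B T y0

/-- `(NP)^{T,y₀}` has the bang-bang property: every minimal norm control `v` satisfies
`‖v(t)‖ = N(T,y₀)` for a.e. `t ∈ (0,T)`. -/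
def NPBangBang (A : Matrix (Fin n) (Fin n) ℝ) (B : Matrix (Fin n) (Fin m) ℝ)
    (T : ℝ) (y0 : EuclideanSpace ℝ (Fin n)) : Prop :=
  ∀ v, IsMinNormControl A B T y0 v →
    ∀ᵐ t ∂(volume.restrict (Ioo (0 : ℝ) T)), ‖v t‖ = (Nmin A B T y0).toReal

/-- `ℛ`, the span of the columns of `B, AB, A²B, …, AⁿB`. -/
def reach (A : Matrix (Fin n) (Fin n) ℝ) (B : Matrix (Fin n) (Fin m) ℝ) :
    Submodule ℝ (EuclideanSpace ℝ (Fin n)) :=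
  Submodule.span ℝ
    {x | ∃ (k : ℕ) (j : Fin m), k ≤ n ∧ x = mulVecE (A ^ k * B) (EuclideanSpace.single j 1)}

/-- Membership in the constraint set `𝒰^M`: measurable and `‖u(t)‖ ≤ M` a.e. on `(0,∞)`. -/
def MemU (M : ℝ) (u : ℝ → EuclideanSpace ℝ (Fin m)) : Prop :=
  Measurable u ∧ ∀ᵐ t ∂(volume.restrict (Ioi (0 : ℝ))), ‖u t‖ ≤ M

/-- `u` is an admissible control for the minimal time problem `(TP)^{M,y₀}`. -/
def TPAdmissible (A : Matrix (Fin n) (Fin n) ℝ) (B : Matrix (Fin n) (Fin m) ℝ)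
    (M : ℝ) (y0 : EuclideanSpace ℝ (Fin n)) (u : ℝ → EuclideanSpace ℝ (Fin m)) : Prop :=
  MemU M u ∧ ∃ t : ℝ, 0 < t ∧ state A B y0 t u = 0

/-- The minimal time `T(M,y₀) ∈ (0,∞]` (with `inf ∅ = ∞`). -/
def minTime (A : Matrix (Fin n) (Fin n) ℝ) (B : Matrix (Fin n) (Fin m) ℝ)
    (M : ℝ) (y0 : EuclideanSpace ℝ (Fin n)) : ℝ≥0∞ :=
  ⨅ (t : ℝ) (_ : 0 < t ∧ ∃ u, MemU M u ∧ state A B y0 t u = 0), ENNReal.ofReal t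

/-- `u` is a minimal time control for `(TP)^{M,y₀}`: it lies in `𝒰^M` and
`y(T(M,y₀); y₀, u) = 0`. -/
def IsMinTimeControl (A : Matrix (Fin n) (Fin n) ℝ) (B : Matrix (Fin n) (Fin m) ℝ)
    (M : ℝ) (y0 : EuclideanSpace ℝ (Fin n)) (u : ℝ → EuclideanSpace ℝ (Fin m)) : Prop :=
  MemU M u ∧ state A B y0 (minTime A B M y0).toReal u = 0

/-- `(TP)^{M,y₀}` has the bang-bang property: every minimal time control `u` satisfies
`‖u(t)‖ = M` for a.e. `t ∈ (0, T(M,y₀))`. -/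
def TPBangBang (A : Matrix (Fin n) (Fin n) ℝ) (B : Matrix (Fin n) (Fin m) ℝ)
    (M : ℝ) (y0 : EuclideanSpace ℝ (Fin n)) : Prop :=
  ∀ u, IsMinTimeControl A B M y0 u →
    ∀ᵐ t ∂(volume.restrict (Ioo (0 : ℝ) (minTime A B M y0).toReal)), ‖u t‖ = M

/-- `N(∞,y₀) = inf_{T>0} N(T,y₀)`. -/
def Ninf (A : Matrix (Fin n) (Fin n) ℝ) (B : Matrix (Fin n) (Fin m) ℝ)
    (y0 : EuclideanSpace ℝ (Fin n)) : ℝ≥0∞ :=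
  ⨅ (T : ℝ) (_ : 0 < T), Nmin A B T y0

/-- `t ↦ B^⊤ e^{(T-t)A^⊤} z`. -/
def adjOut (A : Matrix (Fin n) (Fin n) ℝ) (B : Matrix (Fin n) (Fin m) ℝ)
    (T : ℝ) (z : EuclideanSpace ℝ (Fin n)) (t : ℝ) : EuclideanSpace ℝ (Fin m) :=
  mulVecE Bᵀ (mulVecE (NormedSpace.exp ((T - t) • Aᵀ)) z)

/-- The reachable set `R_T`. -/
def reachSet (A : Matrix (Fin n) (Fin n) ℝ) (B : Matrix (Fin n) (Fin m) ℝ)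
    (T : ℝ) : Set (EuclideanSpace ℝ (Fin n)) :=
  {x | ∃ v : ℝ → EuclideanSpace ℝ (Fin m),
    Measurable v ∧ supNorm T v < ⊤ ∧ reachOutput A B T v = x}

/-- The reachable norm `‖x‖_{R_T}`, valued in `[0,∞]`. -/
def reachNorm (A : Matrix (Fin n) (Fin n) ℝ) (B : Matrix (Fin n) (Fin m) ℝ)
    (T : ℝ) (x : EuclideanSpace ℝ (Fin n)) : ℝ≥0∞ :=
  ⨅ (v : ℝ → EuclideanSpace ℝ (Fin m))
    (_ : Measurable v ∧ supNorm T v < ⊤ ∧ reachOutput A B T v = x), supNorm T v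

section Lemmas
variable {a b : ℕ}

lemma mulVecE_add (M : Matrix (Fin a) (Fin b) ℝ) (x y : EuclideanSpace ℝ (Fin b)) :
    mulVecE M (x + y) = mulVecE M x + mulVecE M y := by
  simp [mulVecE, Matrix.mulVec_add]

lemma mulVecE_smul (M : Matrix (Fin a) (Fin b) ℝ) (r : ℝ) (x : EuclideanSpace ℝ (Fin b)) :
    mulVecE M (r • x) = r • mulVecE M x := by
  simp [mulVecE, Matrix.mulVec_smul]

lemma mulVecE_zero (M : Matrix (Fin a) (Fin b) ℝ) :
    mulVecE M (0 : EuclideanSpace ℝ (Fin b)) = 0 := by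
  simp [mulVecE]

lemma mulVecE_neg (M : Matrix (Fin a) (Fin b) ℝ) (x : EuclideanSpace ℝ (Fin b)) :
    mulVecE M (-x) = -mulVecE M x := by
  have := mulVecE_smul M (-1) x; simpa using this

def matL : Matrix (Fin a) (Fin b) ℝ →ₗ[ℝ]
    (EuclideanSpace ℝ (Fin b) →ₗ[ℝ] EuclideanSpace ℝ (Fin a)) where
  toFun M :=
    { toFun := mulVecE M
      map_add' := mulVecE_add M
      map_smul' := mulVecE_smul M }
  map_add' M N := by
    apply LinearMap.ext; intro x
    show mulVecE (M + N) x = mulVecE M x + mulVecE N x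
    simp [mulVecE, Matrix.add_mulVec]
  map_smul' r M := by
    apply LinearMap.ext; intro x
    show mulVecE (r • M) x = r • mulVecE M x
    simp [mulVecE, Matrix.smul_mulVec]

def matCLM : Matrix (Fin a) (Fin b) ℝ →ₗ[ℝ]
    (EuclideanSpace ℝ (Fin b) →L[ℝ] EuclideanSpace ℝ (Fin a)) :=
  LinearMap.toContinuousLinearMap.toLinearMap.comp matL

@[simp] lemma matCLM_apply (M : Matrix (Fin a) (Fin b) ℝ) (x : EuclideanSpace ℝ (Fin b)) :
    matCLM M x = mulVecE M x := rfl


lemma inner_mulVecE (M : Matrix (Fin a) (Fin b) ℝ) (x : EuclideanSpace ℝ (Fin b))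
    (y : EuclideanSpace ℝ (Fin a)) : ⟪mulVecE M x, y⟫ = ⟪x, mulVecE Mᵀ y⟫ := by
  simp only [mulVecE, PiLp.inner_apply, RCLike.inner_apply, conj_trivial]
  simp [EuclideanSpace.equiv, Matrix.mulVec, dotProduct, Finset.mul_sum, Finset.sum_mul]
  rw [Finset.sum_comm]
  exact Finset.sum_congr rfl fun i _ => Finset.sum_congr rfl fun j _ => by ring

lemma continuous_expMat (A : Matrix (Fin a) (Fin a) ℝ) (T : ℝ) :
    Continuous fun t : ℝ => NormedSpace.exp ((T - t) • A) := by
  letI : SeminormedRing (Matrix (Fin a) (Fin a) ℝ) := Matrix.linftyOpSemiNormedRing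
  letI : NormedRing (Matrix (Fin a) (Fin a) ℝ) := Matrix.linftyOpNormedRing
  letI : NormedAlgebra ℝ (Matrix (Fin a) (Fin a) ℝ) := Matrix.linftyOpNormedAlgebra
  letI : NormedAlgebra ℚ (Matrix (Fin a) (Fin a) ℝ) := NormedAlgebra.restrictScalars ℚ ℝ _
  exact NormedSpace.exp_continuous.comp
    ((continuous_const.sub continuous_id).smul continuous_const)

variable (A : Matrix (Fin n) (Fin n) ℝ) (B : Matrix (Fin n) (Fin m) ℝ) (T : ℝ)

/-- pointwise adjoint identity -/
lemma inner_integrand (v : EuclideanSpace ℝ (Fin m)) (z : EuclideanSpace ℝ (Fin n)) (s : ℝ) :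
    ⟪mulVecE (NormedSpace.exp ((T - s) • A)) (mulVecE B v), z⟫
      = ⟪v, adjOut A B T z s⟫ := by
  rw [inner_mulVecE, inner_mulVecE, adjOut]
  congr 2
  rw [← Matrix.transpose_smul, Matrix.exp_transpose]

/-- continuity of the adjoint output in time -/
lemma continuous_adjOut (z : EuclideanSpace ℝ (Fin n)) :
    Continuous fun t => adjOut A B T z t := by
  simp only [adjOut]
  have h1 : Continuous fun t : ℝ =>
      mulVecE (NormedSpace.exp ((T - t) • Aᵀ)) z := by
    have hc : Continuous fun M : Matrix (Fin n) (Fin n) ℝ =>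
        (matCLM M : EuclideanSpace ℝ (Fin n) →L[ℝ] EuclideanSpace ℝ (Fin n)) :=
      matCLM.continuous_of_finiteDimensional
    have : Continuous fun t : ℝ =>
        (matCLM (NormedSpace.exp ((T - t) • Aᵀ)) :
          EuclideanSpace ℝ (Fin n) →L[ℝ] EuclideanSpace ℝ (Fin n)) :=
      hc.comp (continuous_expMat Aᵀ T)
    exact (isBoundedBilinearMap_apply.continuous.comp (this.prodMk continuous_const) :
      Continuous fun t : ℝ => _)
  exact ((matCLM Bᵀ).continuous).comp h1 |>.congr fun t => rfl


lemma restrict_Ioo_eq_Ioc :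
    (volume : Measure ℝ).restrict (Ioo (0:ℝ) T) = volume.restrict (Ioc (0:ℝ) T) :=
  Measure.restrict_congr_set Ioo_ae_eq_Ioc

lemma ae_bound_of_supNorm_lt_top (v : ℝ → EuclideanSpace ℝ (Fin m))
    (h : supNorm T v < ⊤) :
    ∀ᵐ t ∂(volume.restrict (Ioo (0:ℝ) T)), ‖v t‖ ≤ (supNorm T v).toReal := by
  have hle := ae_le_eLpNormEssSup (f := v) (μ := volume.restrict (Ioo (0:ℝ) T))
  filter_upwards [hle] with t ht
  have h2 : (‖v t‖₊ : ℝ≥0∞) ≤ supNorm T v := by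
    rw [supNorm, eLpNorm_exponent_top]; exact_mod_cast ht
  have := ENNReal.toReal_mono h.ne h2
  simpa using this

lemma supNorm_le_of_ae_bound {v : ℝ → EuclideanSpace ℝ (Fin m)} {c : ℝ}
    (hb : ∀ᵐ t ∂(volume.restrict (Ioo (0:ℝ) T)), ‖v t‖ ≤ c) :
    supNorm T v ≤ ENNReal.ofReal c := by
  rw [supNorm, eLpNorm_exponent_top]
  exact eLpNormEssSup_le_of_ae_bound hb

lemma measurable_integrand {v : ℝ → EuclideanSpace ℝ (Fin m)} (hv : Measurable v) :
    Measurable fun s => mulVecE (NormedSpace.exp ((T - s) • A)) (mulVecE B (v s)) := by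
  have hc : Continuous fun M : Matrix (Fin n) (Fin n) ℝ =>
      (matCLM M : EuclideanSpace ℝ (Fin n) →L[ℝ] EuclideanSpace ℝ (Fin n)) :=
    matCLM.continuous_of_finiteDimensional
  have h1 : Measurable fun s : ℝ =>
      ((matCLM (NormedSpace.exp ((T - s) • A)), matCLM B (v s)) :
        (EuclideanSpace ℝ (Fin n) →L[ℝ] EuclideanSpace ℝ (Fin n)) × EuclideanSpace ℝ (Fin n)) :=
    ((hc.comp (continuous_expMat A T)).measurable).prodMk
      (((matCLM B).continuous.measurable).comp hv)
  exact (isBoundedBilinearMap_apply.continuous.measurable).comp h1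

lemma exists_expBound (hT : 0 < T) : ∃ C : ℝ, 0 ≤ C ∧ ∀ s ∈ Icc (0:ℝ) T,
    ‖(matCLM (NormedSpace.exp ((T - s) • A)) :
      EuclideanSpace ℝ (Fin n) →L[ℝ] EuclideanSpace ℝ (Fin n))‖ ≤ C := by
  have hc : Continuous fun M : Matrix (Fin n) (Fin n) ℝ =>
      (matCLM M : EuclideanSpace ℝ (Fin n) →L[ℝ] EuclideanSpace ℝ (Fin n)) :=
    matCLM.continuous_of_finiteDimensional
  have hcont : ContinuousOn
      (fun s : ℝ => ‖(matCLM (NormedSpace.exp ((T - s) • A)) :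
        EuclideanSpace ℝ (Fin n) →L[ℝ] EuclideanSpace ℝ (Fin n))‖) (Icc 0 T) :=
    (continuous_norm.comp (hc.comp (continuous_expMat A T))).continuousOn
  obtain ⟨s₀, _, hs₀⟩ := isCompact_Icc.exists_isMaxOn
    (nonempty_Icc.mpr hT.le) hcont
  exact ⟨max _ 0, le_max_right _ _, fun s hs => le_max_of_le_left (hs₀ hs)⟩

lemma integrable_integrand (hT : 0 < T) {v : ℝ → EuclideanSpace ℝ (Fin m)}
    (hv : Measurable v) {c : ℝ}
    (hb : ∀ᵐ t ∂(volume.restrict (Ioo (0:ℝ) T)), ‖v t‖ ≤ c) :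
    IntegrableOn
      (fun s => mulVecE (NormedSpace.exp ((T - s) • A)) (mulVecE B (v s)))
      (Ioc (0:ℝ) T) volume := by
  obtain ⟨C, hC0, hC⟩ := exists_expBound A T hT
  haveI : Fact ((volume : Measure ℝ) (Ioc (0:ℝ) T) < ⊤) := ⟨measure_Ioc_lt_top⟩
  rw [IntegrableOn]
  have hb' : ∀ᵐ t ∂(volume.restrict (Ioc (0:ℝ) T)), ‖v t‖ ≤ c := by
    rw [← restrict_Ioo_eq_Ioc]; exact hb
  refine Integrable.mono' (integrable_const (C * (‖(matCLM B :
      EuclideanSpace ℝ (Fin m) →L[ℝ] EuclideanSpace ℝ (Fin n))‖ * c)))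
    ((measurable_integrand A B T hv).aestronglyMeasurable) ?_
  filter_upwards [hb', ae_restrict_mem measurableSet_Ioc] with s hs hmem
  have h1 : ‖mulVecE (NormedSpace.exp ((T - s) • A)) (mulVecE B (v s))‖
      ≤ C * ‖mulVecE B (v s)‖ := by
    have := (matCLM (NormedSpace.exp ((T - s) • A)) :
      EuclideanSpace ℝ (Fin n) →L[ℝ] EuclideanSpace ℝ (Fin n)).le_opNorm (mulVecE B (v s))
    refine le_trans this (mul_le_mul_of_nonneg_right ?_ (norm_nonneg _))
    exact hC s ⟨hmem.1.le, hmem.2⟩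
  refine h1.trans ?_
  refine mul_le_mul_of_nonneg_left ?_ hC0
  have h2 := (matCLM B : EuclideanSpace ℝ (Fin m) →L[ℝ]
    EuclideanSpace ℝ (Fin n)).le_opNorm (v s)
  exact h2.trans (mul_le_mul_of_nonneg_left hs (norm_nonneg _))

lemma pairing (hT : 0 < T) {v : ℝ → EuclideanSpace ℝ (Fin m)} (hv : Measurable v) {c : ℝ}
    (hb : ∀ᵐ t ∂(volume.restrict (Ioo (0:ℝ) T)), ‖v t‖ ≤ c)
    (z : EuclideanSpace ℝ (Fin n)) :
    ⟪reachOutput A B T v, z⟫ = ∫ s in Ioc (0:ℝ) T, ⟪v s, adjOut A B T z s⟫ := by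
  rw [reachOutput, real_inner_comm,
    ← integral_inner (integrable_integrand A B T hT hv hb) z]
  refine integral_congr_ae (Filter.Eventually.of_forall fun s => ?_)
  show ⟪z, _⟫ = ⟪v s, adjOut A B T z s⟫
  rw [real_inner_comm, inner_integrand]


/-- the L¹ norm of the adjoint output -/
def sigma (A : Matrix (Fin n) (Fin n) ℝ) (B : Matrix (Fin n) (Fin m) ℝ) (T : ℝ)
    (z : EuclideanSpace ℝ (Fin n)) : ℝ :=
  ∫ t in Ioc (0:ℝ) T, ‖adjOut A B T z t‖

lemma sigma_nonneg (z : EuclideanSpace ℝ (Fin n)) : 0 ≤ sigma A B T z :=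
  integral_nonneg fun t => norm_nonneg _

lemma integrableOn_norm_adjOut (z : EuclideanSpace ℝ (Fin n)) :
    IntegrableOn (fun t => ‖adjOut A B T z t‖) (Ioc (0:ℝ) T) volume :=
  ((continuous_adjOut A B T z).norm).integrableOn_Ioc

lemma vanish_of_sigma_eq_zero {z : EuclideanSpace ℝ (Fin n)}
    (h : sigma A B T z = 0) : ∀ t ∈ Ioo (0:ℝ) T, adjOut A B T z t = 0 := by
  have hmeas : MeasurableSet {t : ℝ | adjOut A B T z t ≠ 0} :=
    (isOpen_compl_iff.mpr (isClosed_singleton.preimage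
      (continuous_adjOut A B T z))).measurableSet
  have h0 : (fun t => ‖adjOut A B T z t‖) =ᵐ[volume.restrict (Ioc (0:ℝ) T)] 0 := by
    rw [← integral_eq_zero_iff_of_nonneg
      (fun t => norm_nonneg _) (integrableOn_norm_adjOut A B T z)]
    exact h
  have hnull : (volume.restrict (Ioc (0:ℝ) T)) {t : ℝ | adjOut A B T z t ≠ 0} = 0 := by
    have := h0
    rw [Filter.eventuallyEq_iff_exists_mem] at this
    obtain ⟨s, hs, hfs⟩ := this
    rw [mem_ae_iff] at hs
    refine measure_mono_null (fun t ht => ?_) hs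
    simp only [mem_setOf_eq] at ht
    intro hc
    exact ht (by simpa [norm_eq_zero] using hfs hc)
  intro t ht
  by_contra hc
  have hU : IsOpen (Ioo (0:ℝ) T ∩ {t : ℝ | adjOut A B T z t ≠ 0}) :=
    isOpen_Ioo.inter (isOpen_compl_iff.mpr (isClosed_singleton.preimage
      (continuous_adjOut A B T z)))
  have hpos : 0 < volume (Ioo (0:ℝ) T ∩ {t : ℝ | adjOut A B T z t ≠ 0}) :=
    hU.measure_pos volume ⟨t, ht, hc⟩
  have : volume (Ioo (0:ℝ) T ∩ {t : ℝ | adjOut A B T z t ≠ 0}) = 0 := by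
    rw [Measure.restrict_apply hmeas] at hnull
    refine measure_mono_null (fun x hx => ?_) hnull
    exact ⟨hx.2, Ioo_subset_Ioc_self hx.1⟩
  exact hpos.ne' this

lemma sigma_pos {z : EuclideanSpace ℝ (Fin n)}
    (h : ∃ t ∈ Ioo (0:ℝ) T, adjOut A B T z t ≠ 0) : 0 < sigma A B T z := by
  rcases lt_or_eq_of_le (sigma_nonneg A B T z) with hlt | heq
  · exact hlt
  · obtain ⟨t, ht, hne⟩ := h
    exact absurd (vanish_of_sigma_eq_zero A B T heq.symm t ht) hne

/-- the pointwise-optimal control -/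
def vz (A : Matrix (Fin n) (Fin n) ℝ) (B : Matrix (Fin n) (Fin m) ℝ) (T : ℝ)
    (c : ℝ) (z : EuclideanSpace ℝ (Fin n)) (t : ℝ) : EuclideanSpace ℝ (Fin m) :=
  c • (‖adjOut A B T z t‖)⁻¹ • adjOut A B T z t

lemma measurable_vz (c : ℝ) (z : EuclideanSpace ℝ (Fin n)) :
    Measurable (vz A B T c z) := by
  have h := (continuous_adjOut A B T z).measurable
  exact ((h.norm.inv.smul h).const_smul c)

lemma norm_vz_le {c : ℝ} (hc : 0 ≤ c) (z : EuclideanSpace ℝ (Fin n)) (t : ℝ) :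
    ‖vz A B T c z t‖ ≤ c := by
  rw [vz, norm_smul, norm_smul]
  rcases eq_or_ne (adjOut A B T z t) 0 with h | h
  · simp [h, hc]
  · rw [norm_inv, norm_norm, inv_mul_cancel₀ (norm_ne_zero_iff.mpr h)]
    simp [abs_of_nonneg hc]

lemma inner_vz (c : ℝ) (z : EuclideanSpace ℝ (Fin n)) (t : ℝ) :
    ⟪vz A B T c z t, adjOut A B T z t⟫ = c * ‖adjOut A B T z t‖ := by
  rw [vz, real_inner_smul_left, real_inner_smul_left, real_inner_self_eq_norm_mul_norm]
  rcases eq_or_ne (adjOut A B T z t) 0 with h | h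
  · simp [h]
  · have hn : ‖adjOut A B T z t‖ ≠ 0 := norm_ne_zero_iff.mpr h
    field_simp

lemma pairing_vz (hT : 0 < T) {c : ℝ} (hc : 0 ≤ c) (z : EuclideanSpace ℝ (Fin n)) :
    ⟪reachOutput A B T (vz A B T c z), z⟫ = c * sigma A B T z := by
  rw [pairing A B T hT (measurable_vz A B T c z)
    (Filter.Eventually.of_forall (norm_vz_le A B T hc z))]
  rw [sigma, ← integral_const_mul]
  exact integral_congr_ae (Filter.Eventually.of_forall fun t => inner_vz A B T c z t)

lemma reachOutput_zero : reachOutput A B T (fun _ => 0) = 0 := by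
  rw [reachOutput]
  have : ∀ s : ℝ, mulVecE (NormedSpace.exp ((T - s) • A))
      (mulVecE B (0 : EuclideanSpace ℝ (Fin m))) = 0 := fun s => by
    rw [mulVecE_zero, mulVecE_zero]
  simp only [this, integral_zero]

lemma reachOutput_add (hT : 0 < T) {v w : ℝ → EuclideanSpace ℝ (Fin m)}
    (hv : Measurable v) (hw : Measurable w) {c c' : ℝ}
    (hbv : ∀ᵐ t ∂(volume.restrict (Ioo (0:ℝ) T)), ‖v t‖ ≤ c)
    (hbw : ∀ᵐ t ∂(volume.restrict (Ioo (0:ℝ) T)), ‖w t‖ ≤ c') :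
    reachOutput A B T (fun t => v t + w t)
      = reachOutput A B T v + reachOutput A B T w := by
  rw [reachOutput, reachOutput, reachOutput,
    ← integral_add (integrable_integrand A B T hT hv hbv)
      (integrable_integrand A B T hT hw hbw)]
  refine integral_congr_ae (Filter.Eventually.of_forall fun s => ?_)
  show mulVecE _ (mulVecE B (v s + w s)) = _
  rw [mulVecE_add, mulVecE_add]

lemma reachOutput_smul (r : ℝ) (v : ℝ → EuclideanSpace ℝ (Fin m)) :
    reachOutput A B T (fun t => r • v t) = r • reachOutput A B T v := by
  rw [reachOutput, reachOutput, ← integral_smul]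
  refine integral_congr_ae (Filter.Eventually.of_forall fun s => ?_)
  show mulVecE _ (mulVecE B (r • v s)) = _
  rw [mulVecE_smul, mulVecE_smul]


lemma adjOut_add (z w : EuclideanSpace ℝ (Fin n)) (t : ℝ) :
    adjOut A B T (z + w) t = adjOut A B T z t + adjOut A B T w t := by
  rw [adjOut, adjOut, adjOut, mulVecE_add, mulVecE_add]

lemma adjOut_smul (r : ℝ) (z : EuclideanSpace ℝ (Fin n)) (t : ℝ) :
    adjOut A B T (r • z) t = r • adjOut A B T z t := by
  rw [adjOut, adjOut, mulVecE_smul, mulVecE_smul]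

/-- the unobservable subspace -/
def Wsub (A : Matrix (Fin n) (Fin n) ℝ) (B : Matrix (Fin n) (Fin m) ℝ) (T : ℝ) :
    Submodule ℝ (EuclideanSpace ℝ (Fin n)) where
  carrier := {z | ∀ t ∈ Ioo (0:ℝ) T, adjOut A B T z t = 0}
  add_mem' := by
    intro z w hz hw t ht
    rw [adjOut_add, hz t ht, hw t ht, add_zero]
  zero_mem' := by
    intro t _
    have := adjOut_smul A B T 0 0 t
    simpa using this
  smul_mem' := by
    intro r z hz t ht
    rw [adjOut_smul, hz t ht, smul_zero]

/-- reachable set with controls bounded by `c` -/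
def Kset (A : Matrix (Fin n) (Fin n) ℝ) (B : Matrix (Fin n) (Fin m) ℝ) (T : ℝ)
    (c : ℝ) : Set (EuclideanSpace ℝ (Fin n)) :=
  {x | ∃ v : ℝ → EuclideanSpace ℝ (Fin m), Measurable v ∧
    (∀ᵐ t ∂(volume.restrict (Ioo (0:ℝ) T)), ‖v t‖ ≤ c) ∧ reachOutput A B T v = x}

lemma zero_mem_Kset {c : ℝ} (hc : 0 ≤ c) : (0 : EuclideanSpace ℝ (Fin n)) ∈ Kset A B T c :=
  ⟨fun _ => 0, measurable_const,
    Filter.Eventually.of_forall fun _ => by simpa using hc, reachOutput_zero A B T⟩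

lemma Kset_add (hT : 0 < T) {c c' : ℝ} {x y : EuclideanSpace ℝ (Fin n)}
    (hx : x ∈ Kset A B T c) (hy : y ∈ Kset A B T c') :
    x + y ∈ Kset A B T (c + c') := by
  obtain ⟨v, hv, hbv, hxv⟩ := hx
  obtain ⟨w, hw, hbw, hyw⟩ := hy
  refine ⟨fun t => v t + w t, hv.add hw, ?_, ?_⟩
  · filter_upwards [hbv, hbw] with t h1 h2
    exact (norm_add_le _ _).trans (add_le_add h1 h2)
  · rw [reachOutput_add A B T hT hv hw hbv hbw, hxv, hyw]

lemma Kset_smul {c : ℝ} (r : ℝ) {x : EuclideanSpace ℝ (Fin n)}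
    (hx : x ∈ Kset A B T c) : r • x ∈ Kset A B T (|r| * c) := by
  obtain ⟨v, hv, hbv, hxv⟩ := hx
  refine ⟨fun t => r • v t, hv.const_smul r, ?_, ?_⟩
  · filter_upwards [hbv] with t h1
    rw [norm_smul, Real.norm_eq_abs]
    exact mul_le_mul_of_nonneg_left h1 (abs_nonneg r)
  · rw [reachOutput_smul, hxv]

lemma Kset_neg {c : ℝ} {x : EuclideanSpace ℝ (Fin n)}
    (hx : x ∈ Kset A B T c) : -x ∈ Kset A B T c := by
  have := Kset_smul A B T (-1) hx
  simpa using this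

lemma convex_Kset (hT : 0 < T) (c : ℝ) : Convex ℝ (Kset A B T c) := by
  intro x hx y hy a b ha hb hab
  have h1 := Kset_add A B T hT (Kset_smul A B T a hx) (Kset_smul A B T b hy)
  rwa [abs_of_nonneg ha, abs_of_nonneg hb, ← add_mul, hab, one_mul] at h1

lemma vz_mem_Kset (hT : 0 < T) {c : ℝ} (hc : 0 ≤ c) (z : EuclideanSpace ℝ (Fin n)) :
    reachOutput A B T (vz A B T c z) ∈ Kset A B T c :=
  ⟨vz A B T c z, measurable_vz A B T c z,
    Filter.Eventually.of_forall (norm_vz_le A B T hc z), rfl⟩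

/-- every reachable state is orthogonal to `Wsub` -/
lemma inner_reachOutput_Wsub (hT : 0 < T) {v : ℝ → EuclideanSpace ℝ (Fin m)}
    (hv : Measurable v) {c : ℝ}
    (hb : ∀ᵐ t ∂(volume.restrict (Ioo (0:ℝ) T)), ‖v t‖ ≤ c)
    {w : EuclideanSpace ℝ (Fin n)} (hw : w ∈ Wsub A B T) :
    ⟪reachOutput A B T v, w⟫ = 0 := by
  rw [pairing A B T hT hv hb w]
  have heq : ∀ᵐ s ∂(volume.restrict (Ioc (0:ℝ) T)),
      ⟪v s, adjOut A B T w s⟫ = (0:ℝ) := by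
    rw [← restrict_Ioo_eq_Ioc]
    filter_upwards [ae_restrict_mem measurableSet_Ioo] with s hs
    rw [hw s hs, inner_zero_right]
  rw [integral_congr_ae heq, integral_zero]

lemma Kset_subset_orthogonal (hT : 0 < T) {c : ℝ} {x : EuclideanSpace ℝ (Fin n)}
    (hx : x ∈ Kset A B T c) : x ∈ (Wsub A B T)ᗮ := by
  obtain ⟨v, hv, hb, rfl⟩ := hx
  rw [Submodule.mem_orthogonal]
  intro w hw
  rw [real_inner_comm]
  exact inner_reachOutput_Wsub A B T hT hv hb hw


lemma sigma_eq_zero_of_mem_Wsub {z : EuclideanSpace ℝ (Fin n)}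
    (hz : z ∈ Wsub A B T) : sigma A B T z = 0 := by
  rw [sigma]
  have heq : ∀ᵐ s ∂(volume.restrict (Ioc (0:ℝ) T)), ‖adjOut A B T z s‖ = (0:ℝ) := by
    rw [← restrict_Ioo_eq_Ioc]
    filter_upwards [ae_restrict_mem measurableSet_Ioo] with s hs
    rw [hz s hs, norm_zero]
  rw [integral_congr_ae heq, integral_zero]

lemma exists_adjOut_ne_zero_of_sigma_pos {z : EuclideanSpace ℝ (Fin n)}
    (h : 0 < sigma A B T z) : ∃ t ∈ Ioo (0:ℝ) T, adjOut A B T z t ≠ 0 := by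
  by_contra hc
  push_neg at hc
  exact h.ne' (sigma_eq_zero_of_mem_Wsub A B T hc)

lemma eq_zero_of_mem_both {z : EuclideanSpace ℝ (Fin n)}
    (h1 : z ∈ Wsub A B T) (h2 : z ∈ (Wsub A B T)ᗮ) : z = 0 := by
  have := (Submodule.mem_orthogonal _ z).mp h2 z h1
  rwa [inner_self_eq_zero] at this

section Geometry

/-- `Kset` viewed inside the subspace `(Wsub)ᗮ` -/
def KV (c : ℝ) : Set ((Wsub A B T)ᗮ) :=
  (Subtype.val) ⁻¹' (Kset A B T c)

lemma convex_KV (hT : 0 < T) (c : ℝ) : Convex ℝ (KV A B T c) :=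
  (convex_Kset A B T hT c).linear_preimage ((Wsub A B T)ᗮ.subtype)

lemma zero_mem_KV {c : ℝ} (hc : 0 ≤ c) : (0 : (Wsub A B T)ᗮ) ∈ KV A B T c := by
  show ((0 : (Wsub A B T)ᗮ) : EuclideanSpace ℝ (Fin n)) ∈ Kset A B T c
  rw [Submodule.coe_zero]
  exact zero_mem_Kset A B T hc

lemma span_KV_eq_top (hT : 0 < T) {c : ℝ} (hc : 0 < c) : Submodule.span ℝ (KV A B T c) = ⊤ := by
  by_contra hne
  have hbot : (Submodule.span ℝ (KV A B T c))ᗮ ≠ ⊥ := by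
    intro h
    exact hne (Submodule.orthogonal_eq_bot_iff.mp h)
  obtain ⟨z', hz'mem, hz'ne⟩ := Submodule.ne_bot_iff _ |>.mp hbot
  set z : EuclideanSpace ℝ (Fin n) := (z' : EuclideanSpace ℝ (Fin n)) with hzdef
  have hzV : z ∈ (Wsub A B T)ᗮ := z'.2
  have hzne : z ≠ 0 := fun h => hz'ne (Subtype.ext h)
  have hznW : z ∉ Wsub A B T := fun h => hzne (eq_zero_of_mem_both A B T h hzV)
  have hex : ∃ t ∈ Ioo (0:ℝ) T, adjOut A B T z t ≠ 0 := by
    by_contra hcon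
    push_neg at hcon
    exact hznW hcon
  have hσ : 0 < sigma A B T z := sigma_pos A B T hex
  set x : EuclideanSpace ℝ (Fin n) := reachOutput A B T (vz A B T c z) with hxdef
  have hxK : x ∈ Kset A B T c := vz_mem_Kset A B T hT hc.le z
  have hxV : x ∈ (Wsub A B T)ᗮ := Kset_subset_orthogonal A B T hT hxK
  have hxKV : (⟨x, hxV⟩ : (Wsub A B T)ᗮ) ∈ KV A B T c := hxK
  have hperp := (Submodule.mem_orthogonal _ z').mp hz'mem _ (Submodule.subset_span hxKV)
  rw [Submodule.coe_inner] at hperp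
  have : ⟪x, z⟫ = c * sigma A B T z := pairing_vz A B T hT hc.le z
  rw [this] at hperp
  exact (mul_pos hc hσ).ne' hperp

lemma zero_mem_interior_KV (hT : 0 < T) {c : ℝ} (hc : 0 < c) :
    (0 : (Wsub A B T)ᗮ) ∈ interior (KV A B T c) := by
  have hconv := convex_KV A B T hT c
  have hnonempty : (interior (KV A B T c)).Nonempty := by
    rw [hconv.interior_nonempty_iff_affineSpan_eq_top]
    have h0 : (0 : (Wsub A B T)ᗮ) ∈ KV A B T c := zero_mem_KV A B T hc.le
    rw [AffineSubspace.affineSpan_eq_top_iff_vectorSpan_eq_top_of_nonempty ℝ _ _ ⟨0, h0⟩]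
    have hle : Submodule.span ℝ (KV A B T c) ≤ vectorSpan ℝ (KV A B T c) := by
      rw [Submodule.span_le]
      intro x hx
      have := vsub_mem_vectorSpan ℝ hx h0
      simpa using this
    rw [span_KV_eq_top A B T hT hc] at hle
    exact top_unique hle
  obtain ⟨x, hx⟩ := hnonempty
  have hnegx : -x ∈ KV A B T c := by
    show ((-x : (Wsub A B T)ᗮ) : EuclideanSpace ℝ (Fin n)) ∈ Kset A B T c
    rw [Submodule.coe_neg]
    have hx' : x ∈ KV A B T c := interior_subset hx
    exact Kset_neg A B T hx'
  have hmid := hconv.combo_interior_self_mem_interior hx hnegx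
    (by norm_num : (0:ℝ) < 1/2) (by norm_num : (0:ℝ) ≤ 1/2) (by norm_num)
  have : (1/2 : ℝ) • x + (1/2 : ℝ) • (-x) = 0 := by
    rw [smul_neg, add_neg_cancel]
  rwa [this] at hmid

lemma mem_closure_KV (hT : 0 < T) {S : ℝ} (hS0 : 0 ≤ S) {y : EuclideanSpace ℝ (Fin n)}
    (hyV : y ∈ (Wsub A B T)ᗮ)
    (hy : ∀ z : EuclideanSpace ℝ (Fin n), z ∈ (Wsub A B T)ᗮ →
      ⟪y, z⟫ ≤ S * sigma A B T z) :
    (⟨y, hyV⟩ : (Wsub A B T)ᗮ) ∈ closure (KV A B T S) := by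
  by_contra hnot
  obtain ⟨f, u, hfa, hfy⟩ := geometric_hahn_banach_closed_point
    ((convex_KV A B T hT S).closure) isClosed_closure hnot
  set z' : (Wsub A B T)ᗮ := (InnerProductSpace.toDual ℝ _).symm f with hz'def
  have hfeq : ∀ x : (Wsub A B T)ᗮ, f x = ⟪z', x⟫ := fun x =>
    (InnerProductSpace.toDual_symm_apply).symm
  set z : EuclideanSpace ℝ (Fin n) := (z' : EuclideanSpace ℝ (Fin n)) with hzdef
  have hzV : z ∈ (Wsub A B T)ᗮ := z'.2
  have hu0 : 0 < u := by
    have h0 := hfa 0 (subset_closure (zero_mem_KV A B T hS0))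
    rwa [map_zero] at h0
  set x : EuclideanSpace ℝ (Fin n) := reachOutput A B T (vz A B T S z) with hxdef
  have hxK : x ∈ Kset A B T S := vz_mem_Kset A B T hT hS0 z
  have hxV : x ∈ (Wsub A B T)ᗮ := Kset_subset_orthogonal A B T hT hxK
  have hxKV : (⟨x, hxV⟩ : (Wsub A B T)ᗮ) ∈ KV A B T S := hxK
  have h1 := hfa _ (subset_closure hxKV)
  rw [hfeq, Submodule.coe_inner] at h1
  have h2 : ⟪(z' : EuclideanSpace ℝ (Fin n)), x⟫ = S * sigma A B T z := by
    rw [real_inner_comm]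
    exact pairing_vz A B T hT hS0 z
  rw [h2] at h1
  have h3 := hfy
  rw [hfeq, Submodule.coe_inner] at h3
  have h4 : ⟪y, z⟫ ≤ S * sigma A B T z := hy z hzV
  rw [real_inner_comm] at h4
  linarith

lemma mem_Kset_of_closure (hT : 0 < T) {S ε : ℝ} (hS0 : 0 ≤ S) (hε : 0 < ε)
    {y : EuclideanSpace ℝ (Fin n)} (hyV : y ∈ (Wsub A B T)ᗮ)
    (hcl : (⟨y, hyV⟩ : (Wsub A B T)ᗮ) ∈ closure (KV A B T S)) :
    y ∈ Kset A B T (S + ε) := by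
  obtain ⟨r, hr0, hball⟩ := Metric.mem_nhds_iff.mp
    (mem_interior_iff_mem_nhds.mp (zero_mem_interior_KV A B T hT hε))
  obtain ⟨x, hxKV, hdist⟩ := Metric.mem_closure_iff.mp hcl r hr0
  set d : (Wsub A B T)ᗮ := ⟨y, hyV⟩ - x with hddef
  have hdK : d ∈ KV A B T ε := by
    apply hball
    rw [Metric.mem_ball, dist_zero_right, hddef, ← dist_eq_norm]
    exact hdist
  have : y = (x : EuclideanSpace ℝ (Fin n)) + (d : EuclideanSpace ℝ (Fin n)) := by
    rw [hddef, Submodule.coe_sub]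
    simp
  rw [this]
  exact Kset_add A B T hT hxKV hdK

end Geometry

lemma adjOut_neg (z : EuclideanSpace ℝ (Fin n)) (t : ℝ) :
    adjOut A B T (-z) t = -adjOut A B T z t := by
  have := adjOut_smul A B T (-1) z t
  simpa using this

lemma sigma_neg (z : EuclideanSpace ℝ (Fin n)) : sigma A B T (-z) = sigma A B T z := by
  rw [sigma, sigma]
  refine integral_congr_ae (Filter.Eventually.of_forall fun t => ?_)
  show ‖adjOut A B T (-z) t‖ = ‖adjOut A B T z t‖
  rw [adjOut_neg, norm_neg]

lemma ratio_le (hT : 0 < T) {v : ℝ → EuclideanSpace ℝ (Fin m)}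
    (hvm : Measurable v) (hvfin : supNorm T v < ⊤) {z : EuclideanSpace ℝ (Fin n)}
    (hz : ∃ t ∈ Ioo (0:ℝ) T, adjOut A B T z t ≠ 0) :
    ⟪reachOutput A B T v, z⟫ / sigma A B T z ≤ (supNorm T v).toReal := by
  set c := (supNorm T v).toReal with hcdef
  have hc0 : 0 ≤ c := ENNReal.toReal_nonneg
  have hb : ∀ᵐ t ∂(volume.restrict (Ioo (0:ℝ) T)), ‖v t‖ ≤ c :=
    ae_bound_of_supNorm_lt_top T v hvfin
  have hσ : 0 < sigma A B T z := sigma_pos A B T hz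
  rw [div_le_iff₀ hσ]
  rw [pairing A B T hT hvm hb z]
  have hb' : ∀ᵐ t ∂(volume.restrict (Ioc (0:ℝ) T)), ‖v t‖ ≤ c := by
    rw [← restrict_Ioo_eq_Ioc]; exact hb
  have hgint : IntegrableOn (fun t => c * ‖adjOut A B T z t‖) (Ioc (0:ℝ) T) volume :=
    (integrableOn_norm_adjOut A B T z).const_mul c
  have hfint : IntegrableOn (fun s => ⟪v s, adjOut A B T z s⟫) (Ioc (0:ℝ) T) volume := by
    refine Integrable.mono' hgint
      ((hvm.inner (continuous_adjOut A B T z).measurable).aestronglyMeasurable) ?_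
    filter_upwards [hb'] with s hs
    rw [Real.norm_eq_abs]
    exact (abs_real_inner_le_norm _ _).trans
      (mul_le_mul_of_nonneg_right hs (norm_nonneg _))
  have hmono : ∫ s in Ioc (0:ℝ) T, ⟪v s, adjOut A B T z s⟫
      ≤ ∫ s in Ioc (0:ℝ) T, c * ‖adjOut A B T z s‖ := by
    refine integral_mono_ae hfint hgint ?_
    filter_upwards [hb'] with s hs
    exact (real_inner_le_norm _ _).trans
      (mul_le_mul_of_nonneg_right hs (norm_nonneg _))
  refine hmono.trans ?_
  rw [integral_const_mul, sigma]

lemma exists_witness (hB : B ≠ 0) (hT : 0 < T) :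
    ∃ z : EuclideanSpace ℝ (Fin n), ∃ t ∈ Ioo (0:ℝ) T, adjOut A B T z t ≠ 0 := by
  have : ∃ i j, B i j ≠ 0 := by
    by_contra hc
    push_neg at hc
    exact hB (by ext i j; exact hc i j)
  obtain ⟨i, j, hij⟩ := this
  set z : EuclideanSpace ℝ (Fin n) := EuclideanSpace.single i 1 with hzdef
  have hT' : adjOut A B T z T ≠ 0 := by
    intro hcon
    have h1 : adjOut A B T z T = mulVecE Bᵀ z := by
      rw [adjOut, sub_self, zero_smul, NormedSpace.exp_zero]
      have h0 : mulVecE (1 : Matrix (Fin n) (Fin n) ℝ) z = z := by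
        simp [mulVecE, Matrix.one_mulVec]
      rw [h0]
    rw [h1] at hcon
    have h2 : mulVecE Bᵀ z j = 0 := by rw [hcon]; rfl
    have h3 : mulVecE Bᵀ z j = B i j := by
      show (Bᵀ.mulVec _) j = B i j
      simp only [Matrix.mulVec, dotProduct, Matrix.transpose_apply]
      have : ∀ k, (EuclideanSpace.equiv (Fin n) ℝ) z k = if k = i then 1 else 0 := by
        intro k
        show (EuclideanSpace.single i (1:ℝ)) k = _
        rw [EuclideanSpace.single_apply]
      simp only [this, mul_ite, mul_one, mul_zero]
      rw [Finset.sum_ite_eq' Finset.univ i fun _ => B _ j]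
      simp
    rw [h3] at h2
    exact hij h2
  have hopen : IsOpen {t : ℝ | adjOut A B T z t ≠ 0} :=
    isOpen_compl_iff.mpr (isClosed_singleton.preimage (continuous_adjOut A B T z))
  obtain ⟨ε, hε, hball⟩ := Metric.isOpen_iff.mp hopen T hT'
  refine ⟨z, max (T/2) (T - ε/2), ⟨?_, ?_⟩, ?_⟩
  · exact lt_max_of_lt_left (by linarith)
  · apply max_lt (by linarith) (by linarith)
  · apply hball
    rw [Metric.mem_ball, Real.dist_eq, abs_sub_lt_iff]
    constructor
    · have : max (T/2) (T - ε/2) < T := max_lt (by linarith) (by linarith)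
      linarith
    · have : T - ε/2 ≤ max (T/2) (T - ε/2) := le_max_right _ _
      linarith

end Lemmas

/-- For every `T ∈ (0,∞)` and every `y_T ∈ R_T`:
`‖y_T‖_{R_T} = sup{ ⟨y_T, z⟩ / ∫₀ᵀ ‖B^⊤ e^{(T-t)A^⊤} z‖ dt : z ∈ ℝⁿ,
t ↦ B^⊤ e^{(T-t)A^⊤} z` not identically zero on `(0,T) }`. -/
theorem statement8 {n m : ℕ} (hn : 1 ≤ n) (hm : 1 ≤ m)
    (A : Matrix (Fin n) (Fin n) ℝ) (B : Matrix (Fin n) (Fin m) ℝ) (hB : B ≠ 0)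
    (T : ℝ) (hT : 0 < T) (yT : EuclideanSpace ℝ (Fin n)) (hyT : yT ∈ reachSet A B T) :
    reachNorm A B T yT ≠ ⊤ ∧
    (reachNorm A B T yT).toReal =
      sSup {r : ℝ | ∃ z : EuclideanSpace ℝ (Fin n),
        (∃ t ∈ Ioo (0 : ℝ) T, adjOut A B T z t ≠ 0) ∧
        r = ⟪yT, z⟫ / ∫ t in Ioc (0 : ℝ) T, ‖adjOut A B T z t‖} := by
  obtain ⟨v₀, hv₀m, hv₀fin, hv₀eq⟩ := hyT
  set c₀ := (supNorm T v₀).toReal with hc₀def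
  have hb₀ : ∀ᵐ t ∂(volume.restrict (Ioo (0:ℝ) T)), ‖v₀ t‖ ≤ c₀ :=
    ae_bound_of_supNorm_lt_top T v₀ hv₀fin
  have hfin : reachNorm A B T yT ≠ ⊤ := by
    refine ne_top_of_le_ne_top hv₀fin.ne ?_
    exact iInf₂_le v₀ ⟨hv₀m, hv₀fin, hv₀eq⟩
  refine ⟨hfin, ?_⟩
  have hsetdef : {r : ℝ | ∃ z : EuclideanSpace ℝ (Fin n),
        (∃ t ∈ Ioo (0 : ℝ) T, adjOut A B T z t ≠ 0) ∧
        r = ⟪yT, z⟫ / ∫ t in Ioc (0 : ℝ) T, ‖adjOut A B T z t‖}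
      = {r : ℝ | ∃ z : EuclideanSpace ℝ (Fin n),
        (∃ t ∈ Ioo (0 : ℝ) T, adjOut A B T z t ≠ 0) ∧
        r = ⟪yT, z⟫ / sigma A B T z} := rfl
  rw [hsetdef]
  set 𝒮 : Set ℝ := {r : ℝ | ∃ z : EuclideanSpace ℝ (Fin n),
        (∃ t ∈ Ioo (0 : ℝ) T, adjOut A B T z t ≠ 0) ∧
        r = ⟪yT, z⟫ / sigma A B T z} with hSdef
  -- upper bound for members of 𝒮
  have hub : ∀ (v : ℝ → EuclideanSpace ℝ (Fin m)), Measurable v → supNorm T v < ⊤ →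
      reachOutput A B T v = yT → ∀ r ∈ 𝒮, r ≤ (supNorm T v).toReal := by
    intro v hvm hvfin hveq r hr
    obtain ⟨z, hz, rfl⟩ := hr
    rw [← hveq]
    exact ratio_le A B T hT hvm hvfin hz
  have hbdd : BddAbove 𝒮 := ⟨c₀, fun r hr => hub v₀ hv₀m hv₀fin hv₀eq r hr⟩
  -- 𝒮 is nonempty and sSup 𝒮 ≥ 0
  obtain ⟨z₁, hz₁⟩ := exists_witness A B T hB hT
  have hr₁ : (⟪yT, z₁⟫ / sigma A B T z₁ : ℝ) ∈ 𝒮 := ⟨z₁, hz₁, rfl⟩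
  have hr₂ : (-(⟪yT, z₁⟫ / sigma A B T z₁) : ℝ) ∈ 𝒮 := by
    refine ⟨-z₁, ?_, ?_⟩
    · obtain ⟨t, ht, hne⟩ := hz₁
      exact ⟨t, ht, by rw [adjOut_neg]; simpa using hne⟩
    · rw [sigma_neg, inner_neg_right, neg_div]
  set S := sSup 𝒮 with hSdef2
  have hS0 : 0 ≤ S := by
    have h1 := le_csSup hbdd hr₁
    have h2 := le_csSup hbdd hr₂
    linarith
  -- easy direction
  have heasy : S ≤ (reachNorm A B T yT).toReal := by
    have h1 : ENNReal.ofReal S ≤ reachNorm A B T yT := by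
      rw [reachNorm]
      refine le_iInf₂ fun v hv => ?_
      obtain ⟨hvm, hvfin, hveq⟩ := hv
      have h2 : S ≤ (supNorm T v).toReal :=
        Real.sSup_le (hub v hvm hvfin hveq) ENNReal.toReal_nonneg
      calc ENNReal.ofReal S ≤ ENNReal.ofReal (supNorm T v).toReal :=
            ENNReal.ofReal_le_ofReal h2
        _ = supNorm T v := ENNReal.ofReal_toReal hvfin.ne
    have h3 := ENNReal.toReal_mono hfin h1
    rwa [ENNReal.toReal_ofReal hS0] at h3
  -- hard direction
  have hyV : yT ∈ (Wsub A B T)ᗮ := by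
    rw [← hv₀eq]
    exact Kset_subset_orthogonal A B T hT ⟨v₀, hv₀m, hb₀, rfl⟩
  have hy : ∀ z : EuclideanSpace ℝ (Fin n), z ∈ (Wsub A B T)ᗮ →
      ⟪yT, z⟫ ≤ S * sigma A B T z := by
    intro z hzV
    rcases (sigma_nonneg A B T z).lt_or_eq with hσ | hσ
    · have hex := exists_adjOut_ne_zero_of_sigma_pos A B T hσ
      have hrS : ⟪yT, z⟫ / sigma A B T z ≤ S := le_csSup hbdd ⟨z, hex, rfl⟩
      calc ⟪yT, z⟫ = (⟪yT, z⟫ / sigma A B T z) * sigma A B T z := by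
            rw [div_mul_cancel₀ _ hσ.ne']
        _ ≤ S * sigma A B T z := mul_le_mul_of_nonneg_right hrS hσ.le
    · have hzW : z ∈ Wsub A B T := by
        intro t ht
        exact vanish_of_sigma_eq_zero A B T hσ.symm t ht
      have hz0 : z = 0 := eq_zero_of_mem_both A B T hzW hzV
      rw [hz0]
      simp [sigma_eq_zero_of_mem_Wsub A B T (Submodule.zero_mem _)]
  have hcl := mem_closure_KV A B T hT hS0 hyV hy
  have hkey : ∀ ε : ℝ, 0 < ε → (reachNorm A B T yT).toReal ≤ S + ε := by
    intro ε hε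
    have hmem : yT ∈ Kset A B T (S + ε) :=
      mem_Kset_of_closure A B T hT hS0 hε hyV hcl
    obtain ⟨v, hvm, hvb, hveq⟩ := hmem
    have hsup : supNorm T v ≤ ENNReal.ofReal (S + ε) := supNorm_le_of_ae_bound T hvb
    have hvfin : supNorm T v < ⊤ := hsup.trans_lt ENNReal.ofReal_lt_top
    have h1 : reachNorm A B T yT ≤ ENNReal.ofReal (S + ε) :=
      le_trans (iInf₂_le v ⟨hvm, hvfin, hveq⟩) hsup
    have h2 := ENNReal.toReal_mono ENNReal.ofReal_ne_top h1
    rwa [ENNReal.toReal_ofReal (by linarith)] at h2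
  have hhard : (reachNorm A B T yT).toReal ≤ S := by
    by_contra hcon
    push_neg at hcon
    have := hkey (((reachNorm A B T yT).toReal - S) / 2) (by linarith)
    linarith
  exact le_antisymm hhard heasy

end ControlBBP
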